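/- Let M = (S, A, s0, P) be a finite MDP, φ = ¬U 𝖴 F a reach-avoid objective with U, F ⊆ S disjoint, and (W, r) a ranking witness for φ. Let π be any Markov strategy on M such that for every s ∈ W \ F: Supp(π(s)) ⊆ {a ∈ A(s) : Post(s,a) ⊆ W}, and Supp(π(s)) contains at least one action a with Post(s,a) ∩ {t ∈ W : r(t) < r(s)} ≠ ∅. Then π is almost-sure winning from every s ∈ W for φ. -/

import Mathlib

open scoped BigOperators Classical

/-- A finite Markov decision process: finite state set `S`, finite action set `A`,
nonempty enabled-action sets, an initial state, and a transition kernel that is a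
probability distribution on `S` for every state and enabled action. -/
structure MDP (S A : Type) [Fintype S] [Fintype A] where
  act : S → Finset A
  act_nonempty : ∀ s, (act s).Nonempty
  init : S
  P : S → A → S → ℝ
  P_nonneg : ∀ s a s', 0 ≤ P s a s'
  P_sum_one : ∀ s, ∀ a ∈ act s, (∑ s', P s a s') = 1

variable {S A : Type} [Fintype S] [Fintype A]

/-- `Post(s,a)`: states reachable with positive probability. -/
def post (M : MDP S A) (s : S) (a : A) : Set S := {s' | 0 < M.P s a s'}

/-- The last state of a history `(s, l)` (state `s` followed by action-state steps `l`). -/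
def lastState (s : S) (l : List (A × S)) : S :=
  (l.getLast?.map Prod.snd).getD s

/-- `(s, l)` is a (valid) history of `M`: each action is enabled and each transition
has positive probability. -/
def isHist (M : MDP S A) : S → List (A × S) → Prop
  | _, [] => True
  | s, (a, s') :: rest => a ∈ M.act s ∧ 0 < M.P s a s' ∧ isHist M s' rest

/-- The `i`-th state of the history `(s, l)`. -/
def stateAt (s : S) (l : List (A × S)) : ℕ → S
  | 0 => s
  | i + 1 => ((l[i]?).map Prod.snd).getD s

/-- `Occ(h)`: the set of states occurring in the history `(s, l)`. -/
def occ (s : S) (l : List (A × S)) : Set S :=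
  insert s {t | t ∈ l.map Prod.snd}

/-- The history `(s, l)` satisfies the reach-avoid objective `¬U 𝖴 F`. -/
def satRA (U F : Set S) (s : S) (l : List (A × S)) : Prop :=
  ∃ k ≤ l.length, stateAt s l k ∈ F ∧ ∀ i < k, stateAt s l i ∉ U ∪ F

/-- Probability of the continuation `l` of the history `(s0, pre)` under strategy `π`. -/
noncomputable def prFrom (M : MDP S A) (π : S → List (A × S) → A → ℝ) :
    S → List (A × S) → List (A × S) → ℝ
  | _, _, [] => 1
  | s0, pre, (a, s') :: rest =>
      π s0 pre a * M.P (lastState s0 pre) a s' * prFrom M π s0 (pre ++ [(a, s')]) rest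

/-- `Pr(h; M_π)`: the probability of the history `h = (s, l)` under strategy `π`. -/
noncomputable def prHist (M : MDP S A) (π : S → List (A × S) → A → ℝ)
    (s : S) (l : List (A × S)) : ℝ :=
  prFrom M π s [] l

/-- A (randomized, history-dependent) strategy: maps each history to a probability
distribution over the actions enabled at its last state. -/
structure Strategy (M : MDP S A) where
  toFun : S → List (A × S) → A → ℝ
  nonneg : ∀ s l a, 0 ≤ toFun s l a
  sum_one : ∀ s l, (∑ a, toFun s l a) = 1
  support_mem : ∀ s l a, 0 < toFun s l a → a ∈ M.act (lastState s l)

/-- A (randomized) Markov strategy: maps each state to a probability distribution over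
the actions enabled at that state. -/
structure MarkovStrategy (M : MDP S A) where
  toFun : S → A → ℝ
  nonneg : ∀ s a, 0 ≤ toFun s a
  sum_one : ∀ s, (∑ a, toFun s a) = 1
  support_mem : ∀ s a, 0 < toFun s a → a ∈ M.act s

/-- The history-dependent strategy induced by a Markov strategy. -/
def MarkovStrategy.strat {M : MDP S A} (σ : MarkovStrategy M) : Strategy M where
  toFun s l a := σ.toFun (lastState s l) a
  nonneg s l a := σ.nonneg _ a
  sum_one s l := σ.sum_one _
  support_mem s l a h := σ.support_mem _ a h

/-- Sum of `Pr(h; M_π)` over all histories `h` of length `n` starting at `s` that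
satisfy the reach-avoid objective `¬U 𝖴 F`. -/
noncomputable def satProbN (M : MDP S A) (π : S → List (A × S) → A → ℝ)
    (U F : Set S) (s : S) (n : ℕ) : ℝ :=
  ∑ f : Fin n → A × S,
    if isHist M s (List.ofFn f) ∧ satRA U F s (List.ofFn f)
    then prHist M π s (List.ofFn f) else 0

/-- `Pr_s(¬U 𝖴 F; M_π)`: supremum over `n` of `satProbN`. -/
noncomputable def prSat (M : MDP S A) (π : S → List (A × S) → A → ℝ)
    (U F : Set S) (s : S) : ℝ :=
  ⨆ n : ℕ, satProbN M π U F s n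

/-- The almost-sure winning region `ASW(¬U 𝖴 F)`. -/
def ASW (M : MDP S A) (U F : Set S) : Set S :=
  {s | ∃ π : Strategy M, prSat M π.toFun U F s = 1}

/-- `Allowed(s)`: enabled actions keeping the agent inside `ASW(¬U 𝖴 F)`
(empty for `s ∉ ASW(¬U 𝖴 F)`). -/
def allowed (M : MDP S A) (U F : Set S) (s : S) : Set A :=
  {a | s ∈ ASW M U F ∧ a ∈ M.act s ∧ post M s a ⊆ ASW M U F}

/-- A defender state-observation function: observation-equivalence classes partition the
state space and observation-equivalent states have the same enabled actions. -/
structure ObsFun (M : MDP S A) where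
  obs : S → Set S
  mem_self : ∀ s, s ∈ obs s
  eq_of_mem : ∀ s s', s' ∈ obs s → obs s' = obs s
  act_eq : ∀ s s', s' ∈ obs s → M.act s' = M.act s

/-- Action-visible belief update `Update_v(B, a, s'')`. -/
def updateV (M : MDP S A) (O : ObsFun M) (U0 F0 : Set S)
    (B : Set S) (a : A) (s'' : S) : Set S :=
  {s' | ∃ so ∈ B, a ∈ allowed M U0 F0 so ∧ s' ∈ post M so a ∧ O.obs s' = O.obs s''}

/-- Action-invisible belief update `Update_inv(B, s'')`. -/
def updateInv (M : MDP S A) (O : ObsFun M) (U0 F0 : Set S)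
    (B : Set S) (s'' : S) : Set S :=
  {s' | ∃ so ∈ B, ∃ ao ∈ allowed M U0 F0 so, s' ∈ post M so ao ∧ O.obs s' = O.obs s''}

/-- The unsafe set `U~1 = {(s,B) : s ∈ U1, B ≠ ∅} ∪ {(s,∅) : s ∈ S}` of the
augmented MDP. -/
def augU (U1 : Set S) : Set (S × Set S) :=
  {p | (p.1 ∈ U1 ∧ p.2 ≠ ∅) ∨ p.2 = ∅}

/-- The target set `F~1 = F1 × (2^S \ {∅})` of the augmented MDP. -/
def augF (F1 : Set S) : Set (S × Set S) :=
  {p | p.1 ∈ F1 ∧ p.2 ≠ ∅}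

/-- The action-visible augmented MDP `M~`. -/
noncomputable def augV (M : MDP S A) (O : ObsFun M) (U0 F0 : Set S) :
    MDP (S × Set S) A where
  act p := M.act p.1
  act_nonempty p := M.act_nonempty p.1
  init := (M.init, O.obs M.init)
  P p a q :=
    if p.2.Nonempty ∧ ∃ so ∈ p.2, a ∈ allowed M U0 F0 so then
      (if q.2 = updateV M O U0 F0 p.2 a q.1 then M.P p.1 a q.1 else 0)
    else (if q = (p.1, (∅ : Set S)) then 1 else 0)
  P_nonneg := by
    intro p a q
    try dsimp only
    split_ifs <;> first | exact M.P_nonneg _ _ _ | norm_num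
  P_sum_one := by
    intro p a ha
    by_cases hc : p.2.Nonempty ∧ ∃ so ∈ p.2, a ∈ allowed M U0 F0 so
    · simp only [if_pos hc]
      rw [Fintype.sum_prod_type]
      have : ∀ t : S,
          (∑ C : Set S, if C = updateV M O U0 F0 p.2 a t then M.P p.1 a t else 0)
            = M.P p.1 a t := by
        intro t
        simp [Finset.sum_ite_eq']
      simp only [this]
      exact M.P_sum_one p.1 a ha
    · simp only [if_neg hc]
      simp [Finset.sum_ite_eq']

/-- The action-invisible augmented MDP `M^`. -/
noncomputable def augInv (M : MDP S A) (O : ObsFun M) (U0 F0 : Set S) :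
    MDP (S × Set S) A where
  act p := M.act p.1
  act_nonempty p := M.act_nonempty p.1
  init := (M.init, O.obs M.init)
  P p a q :=
    if (∃ so ∈ p.2, a ∈ allowed M U0 F0 so) ∧ a ∈ M.act p.1 then
      (if q.2 = updateInv M O U0 F0 p.2 q.1 then M.P p.1 a q.1 else 0)
    else (if q = (p.1, (∅ : Set S)) then 1 else 0)
  P_nonneg := by
    intro p a q
    try dsimp only
    split_ifs <;> first | exact M.P_nonneg _ _ _ | norm_num
  P_sum_one := by
    intro p a ha
    by_cases hc : (∃ so ∈ p.2, a ∈ allowed M U0 F0 so) ∧ a ∈ M.act p.1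
    · simp only [if_pos hc]
      rw [Fintype.sum_prod_type]
      have : ∀ t : S,
          (∑ C : Set S, if C = updateInv M O U0 F0 p.2 t then M.P p.1 a t else 0)
            = M.P p.1 a t := by
        intro t
        simp [Finset.sum_ite_eq']
      simp only [this]
      exact M.P_sum_one p.1 a ha
    · simp only [if_neg hc]
      simp [Finset.sum_ite_eq']

/-- The defender's belief after observing (states and actions of) the history `(s0, l)`,
for an action-visible defender: `B0 = DObs_S(s0)`, `B(i+1) = Update_v(Bi, ai, s(i+1))`. -/
def beliefV (M : MDP S A) (O : ObsFun M) (U0 F0 : Set S)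
    (s0 : S) (l : List (A × S)) : Set S :=
  l.foldl (fun B p => updateV M O U0 F0 B p.1 p.2) (O.obs s0)

/-- The defender's belief after observing (the states of) the history `(s0, l)`,
for an action-invisible defender: `B0 = DObs_S(s0)`, `B(i+1) = Update_inv(Bi, s(i+1))`. -/
def beliefInv (M : MDP S A) (O : ObsFun M) (U0 F0 : Set S)
    (s0 : S) (l : List (A × S)) : Set S :=
  l.foldl (fun B p => updateInv M O U0 F0 B p.2) (O.obs s0)

/-- The finite-memory strategy on `M` induced by a Markov strategy of the action-visible
augmented MDP `M~`. -/
noncomputable def inducedV (M : MDP S A) (O : ObsFun M) (U0 F0 : Set S)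
    (σ : MarkovStrategy (augV M O U0 F0)) : Strategy M where
  toFun s l a := σ.toFun (lastState s l, beliefV M O U0 F0 s l) a
  nonneg s l a := σ.nonneg _ a
  sum_one s l := σ.sum_one _
  support_mem s l a h := σ.support_mem _ a h

/-- The finite-memory strategy on `M` induced by a Markov strategy of the
action-invisible augmented MDP `M^`. -/
noncomputable def inducedInv (M : MDP S A) (O : ObsFun M) (U0 F0 : Set S)
    (σ : MarkovStrategy (augInv M O U0 F0)) : Strategy M where
  toFun s l a := σ.toFun (lastState s l, beliefInv M O U0 F0 s l) a
  nonneg s l a := σ.nonneg _ a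
  sum_one s l := σ.sum_one _
  support_mem s l a h := σ.support_mem _ a h

/-- A ranking witness `(W, r)` for the reach-avoid objective `¬U 𝖴 F`. -/
def rankWitness (M : MDP S A) (U F : Set S) (W : Set S) (r : S → ℕ) : Prop :=
  W ∩ U = ∅ ∧
  ∀ s ∈ W \ F, ∃ a ∈ M.act s, post M s a ⊆ W ∧
    (post M s a ∩ {t ∈ W | r t < r s}).Nonempty

/-!
Under `σ` a play started in `W` never enters `U` (it stays in `W` until it reaches `F`), so the
probability of satisfying `¬U 𝖴 F` within `n` steps is `1 - stayₙ`, where `stayₙ` is the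
probability of remaining in `W \ F` for `n` steps. From every state of `W \ F` the strategy
takes, with probability at least some uniform `ε > 0`, a step that strictly lowers the rank;
hence within `N = max r + 1` steps the play leaves `W \ F` with probability at least `ε ^ N`,
and by the Markov property `stay_{kN} ≤ (1 - ε ^ N) ^ k → 0`.
-/

lemma sum_ofFn_succ {β γ : Type*} [Fintype β] [AddCommMonoid γ] (n : ℕ) (g : List β → γ) :
    ∑ f : Fin (n + 1) → β, g (List.ofFn f) = ∑ b : β, ∑ f : Fin n → β, g (b :: List.ofFn f) := by
  rw [← (Fin.consEquiv fun _ : Fin (n + 1) => β).sum_comp, Fintype.sum_prod_type]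
  simp [Fin.consEquiv, List.ofFn_succ]

lemma sum_mul_le_one_sub_mul {ι : Type*} [Fintype ι] {w x : ι → ℝ} (hw : ∀ i, 0 ≤ w i)
    (hw1 : ∑ i, w i = 1) (hx : ∀ i, x i ≤ 1) (j : ι) :
    ∑ i, w i * x i ≤ 1 - w j * (1 - x j) := by
  have hj : w j * (1 - x j) ≤ ∑ i, w i * (1 - x i) :=
    Finset.single_le_sum (fun i _ => mul_nonneg (hw i) (sub_nonneg.2 (hx i)))
      (Finset.mem_univ j)
  simp only [mul_sub, mul_one, Finset.sum_sub_distrib, hw1] at hj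
  linarith

lemma exists_pos_forall_le_of_finite {ι : Type*} [Finite ι] {f : ι → ℝ} (hf : ∀ i, 0 < f i) :
    ∃ ε, 0 < ε ∧ ∀ i, ε ≤ f i := by
  rcases isEmpty_or_nonempty ι with _ | _
  · exact ⟨1, one_pos, isEmptyElim⟩
  · obtain ⟨j, hj⟩ := Finite.exists_min f
    exact ⟨f j, hf j, hj⟩

lemma ciSup_one_sub_eq_one {f : ℕ → ℝ} (hf : ∀ n, 0 ≤ f n) (hsmall : ∀ η > 0, ∃ n, f n < η) :
    ⨆ n, (1 - f n) = 1 :=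
  ciSup_eq_of_forall_le_of_forall_lt_exists_gt (fun n => by linarith [hf n]) fun w hw => by
    obtain ⟨n, hn⟩ := hsmall (1 - w) (by linarith)
    exact ⟨n, by linarith⟩

omit [Fintype S] [Fintype A] in
lemma stateAt_cons_succ (s : S) (p : A × S) (l : List (A × S)) {i : ℕ} (hi : i ≤ l.length) :
    stateAt s (p :: l) (i + 1) = stateAt p.2 l i := by
  cases i with
  | zero => simp [stateAt]
  | succ j => simp [stateAt, List.getElem?_eq_getElem (show j < l.length by omega)]

omit [Fintype S] [Fintype A] in
lemma satRA_nil (U F : Set S) (s : S) : satRA U F s ([] : List (A × S)) ↔ s ∈ F := by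
  simp [satRA, stateAt]

omit [Fintype S] [Fintype A] in
lemma satRA_cons (U F : Set S) (s : S) (p : A × S) (l : List (A × S)) :
    satRA U F s (p :: l) ↔ s ∈ F ∨ s ∉ U ∧ satRA U F p.2 l := by
  constructor
  · rintro ⟨_ | k, hk, hkF, hbefore⟩
    · exact Or.inl hkF
    · have hs := hbefore 0 k.succ_pos
      simp only [stateAt, Set.mem_union, not_or] at hs
      refine Or.inr ⟨hs.1, k, by simpa using hk, ?_, fun i hi => ?_⟩
      · rwa [← stateAt_cons_succ s p l (by simpa using hk)]
      · rw [← stateAt_cons_succ s p l (by simp at hk; omega)]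
        exact hbefore (i + 1) (by omega)
  · rintro (hF | ⟨hU, k, hk, hkF, hbefore⟩)
    · exact ⟨0, Nat.zero_le _, hF, fun i hi => absurd hi i.not_lt_zero⟩
    · by_cases hF : s ∈ F
      · exact ⟨0, Nat.zero_le _, hF, fun i hi => absurd hi i.not_lt_zero⟩
      refine ⟨k + 1, by simpa using hk, by rwa [stateAt_cons_succ s p l hk], ?_⟩
      rintro (_ | i) hi
      · simp [stateAt, hU, hF]
      · rw [stateAt_cons_succ s p l (by omega)]
        exact hbefore i (by omega)

lemma satProbN_zero (M : MDP S A) (π : S → List (A × S) → A → ℝ) (U F : Set S) (s : S) :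
    satProbN M π U F s 0 = if s ∈ F then 1 else 0 := by
  simp [satProbN, isHist, satRA_nil, prHist, prFrom]

namespace MarkovStrategy

variable {M : MDP S A} (σ : MarkovStrategy M)

noncomputable def stepProb (s : S) (p : A × S) : ℝ := σ.toFun s p.1 * M.P s p.1 p.2

lemma stepProb_nonneg (s : S) (p : A × S) : 0 ≤ σ.stepProb s p :=
  mul_nonneg (σ.nonneg _ _) (M.P_nonneg _ _ _)

lemma stepProb_pos_iff {s : S} {p : A × S} :
    0 < σ.stepProb s p ↔ 0 < σ.toFun s p.1 ∧ p.2 ∈ post M s p.1  := by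
  rw [stepProb, post, Set.mem_ofPred_eq, mul_pos_iff,
    or_iff_left fun h => (σ.nonneg s p.1).not_gt h.1]

lemma sum_stepProb (s : S) : ∑ p, σ.stepProb s p = 1 := by
  have hrow : ∀ a, ∑ t, σ.stepProb s (a, t) = σ.toFun s a := by
    intro a
    simp only [stepProb, ← Finset.mul_sum]
    rcases (σ.nonneg s a).eq_or_lt with h | h
    · rw [← h, zero_mul]
    · rw [M.P_sum_one s a (σ.support_mem s a h), mul_one]
  rw [Fintype.sum_prod_type]
  simp only [hrow, σ.sum_one]

noncomputable def pathProb : S → List (A × S) → ℝ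
  | _, [] => 1
  | s, p :: l => σ.stepProb s p * pathProb p.2 l

lemma prFrom_strat (l : List (A × S)) :
    ∀ (s₀ : S) (pre : List (A × S)),
      prFrom M σ.strat.toFun s₀ pre l = σ.pathProb (lastState s₀ pre) l := by
  induction l with
  | nil => intro _ _; rfl
  | cons p l ih =>
    intro s₀ pre
    rw [prFrom, ih, pathProb, stepProb]
    simp [strat, lastState]

lemma prHist_strat (s : S) (l : List (A × S)) :
    prHist M σ.strat.toFun s l = σ.pathProb s l :=
  σ.prFrom_strat l s []

lemma isHist_of_pathProb_ne_zero :
    ∀ {s : S} {l : List (A × S)}, σ.pathProb s l ≠ 0 → isHist M s l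
  | _, [] => fun _ => trivial
  | s, (a, t) :: l => fun h => by
    simp only [pathProb, stepProb, mul_ne_zero_iff] at h
    obtain ⟨⟨ha, ht⟩, hl⟩ := h
    exact ⟨σ.support_mem s a ((σ.nonneg s a).lt_of_ne' ha),
      (M.P_nonneg s a t).lt_of_ne' ht, isHist_of_pathProb_ne_zero hl⟩

lemma sum_pathProb (n : ℕ) (s : S) : ∑ f : Fin n → A × S, σ.pathProb s (List.ofFn f) = 1 := by
  induction n generalizing s with
  | zero => simp [pathProb]
  | succ n ih => simp only [sum_ofFn_succ, pathProb, ← Finset.mul_sum, ih, mul_one, sum_stepProb]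

/-- Histories of positive probability are valid, so `isHist` can be dropped. -/
lemma satProbN_strat (U F : Set S) (s : S) (n : ℕ) :
    satProbN M σ.strat.toFun U F s n =
      ∑ f : Fin n → A × S,
        if satRA U F s (List.ofFn f) then σ.pathProb s (List.ofFn f) else 0 := by
  refine Finset.sum_congr rfl fun f _ => ?_
  rw [prHist_strat]
  by_cases h : σ.pathProb s (List.ofFn f) = 0
  · simp [h]
  · simp [σ.isHist_of_pathProb_ne_zero h]

lemma satProbN_strat_succ (U F : Set S) (s : S) (n : ℕ) :
    satProbN M σ.strat.toFun U F s (n + 1) =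
      if s ∈ F then 1 else if s ∈ U then 0
      else ∑ p, σ.stepProb s p * satProbN M σ.strat.toFun U F p.2 n := by
  simp only [satProbN_strat]
  rw [sum_ofFn_succ n fun l => if satRA U F s l then σ.pathProb s l else 0]
  simp only [satRA_cons, pathProb]
  split_ifs with hF hU
  · simp only [hF, true_or, if_true, ← Finset.mul_sum, sum_pathProb, mul_one, sum_stepProb]
  · simp [hF, hU]
  · simp [hF, hU, Finset.mul_sum, mul_ite]

/-- Probability that the states `0, …, n` of the play all lie in `C`. -/
noncomputable def stayProb (C : Set S) : ℕ → S → ℝ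
  | 0, s => if s ∈ C then 1 else 0
  | n + 1, s => if s ∈ C then ∑ p, σ.stepProb s p * stayProb C n p.2 else 0

variable {σ} {C : Set S}

lemma stayProb_of_notMem {s : S} (hs : s ∉ C) (n : ℕ) : σ.stayProb C n s = 0 := by
  cases n <;> simp [stayProb, hs]

lemma stayProb_succ_of_mem {s : S} (hs : s ∈ C) (n : ℕ) :
    σ.stayProb C (n + 1) s = ∑ p, σ.stepProb s p * σ.stayProb C n p.2 := by
  simp [stayProb, hs]

variable (σ C)

lemma stayProb_nonneg (n : ℕ) (s : S) : 0 ≤ σ.stayProb C n s := by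
  induction n generalizing s with
  | zero => unfold stayProb; split_ifs <;> norm_num
  | succ n ih =>
    unfold stayProb
    split_ifs
    · exact Finset.sum_nonneg fun p _ => mul_nonneg (σ.stepProb_nonneg s p) (ih p.2)
    · rfl

lemma stayProb_le_one (n : ℕ) (s : S) : σ.stayProb C n s ≤ 1 := by
  induction n generalizing s with
  | zero => unfold stayProb; split_ifs <;> norm_num
  | succ n ih =>
    unfold stayProb
    split_ifs
    · calc ∑ p, σ.stepProb s p * σ.stayProb C n p.2 ≤ ∑ p, σ.stepProb s p :=
            Finset.sum_le_sum fun p _ =>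
              mul_le_of_le_one_right (σ.stepProb_nonneg s p) (ih p.2)
        _ = 1 := σ.sum_stepProb s
    · norm_num

variable {σ C}

lemma stayProb_add_le {m : ℕ} {c : ℝ} (hc : 0 ≤ c) (h : ∀ t, σ.stayProb C m t ≤ c)
    (n : ℕ) (s : S) : σ.stayProb C (n + m) s ≤ c * σ.stayProb C n s := by
  induction n generalizing s with
  | zero =>
    by_cases hs : s ∈ C
    · simpa [stayProb, hs] using h s
    · simp [stayProb_of_notMem hs]
  | succ n ih =>
    by_cases hs : s ∈ C
    · rw [Nat.add_right_comm, stayProb_succ_of_mem hs, stayProb_succ_of_mem hs, Finset.mul_sum]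
      refine Finset.sum_le_sum fun p _ => ?_
      rw [mul_left_comm]
      exact mul_le_mul_of_nonneg_left (ih p.2) (σ.stepProb_nonneg s p)
    · simp [stayProb_of_notMem hs]

lemma stayProb_mul_le {m : ℕ} {c : ℝ} (hc : 0 ≤ c) (h : ∀ t, σ.stayProb C m t ≤ c)
    (k : ℕ) (s : S) : σ.stayProb C (k * m) s ≤ c ^ k := by
  induction k generalizing s with
  | zero => simpa using σ.stayProb_le_one C 0 s
  | succ k ih =>
    calc σ.stayProb C ((k + 1) * m) s = σ.stayProb C (k * m + m) s := by rw [Nat.succ_mul]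
      _ ≤ c * σ.stayProb C (k * m) s := stayProb_add_le hc h _ s
      _ ≤ c * c ^ k := mul_le_mul_of_nonneg_left (ih s) hc
      _ = c ^ (k + 1) := (pow_succ' c k).symm

lemma stayProb_le_one_sub_pow {r : S → ℕ} {ε : ℝ} (hε₀ : 0 ≤ ε) (hε₁ : ε ≤ 1)
    (hdesc : ∀ t ∈ C, ∃ p, ε ≤ σ.stepProb t p ∧ r p.2 < r t) (n : ℕ) :
    ∀ t, r t < n → σ.stayProb C n t ≤ 1 - ε ^ n := by
  induction n with
  | zero => intro t ht; omega
  | succ n ih =>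
    intro t ht
    by_cases htC : t ∈ C
    · obtain ⟨p, hεp, hr⟩ := hdesc t htC
      have hp := ih p.2 (by omega)
      rw [stayProb_succ_of_mem htC]
      calc ∑ q, σ.stepProb t q * σ.stayProb C n q.2
          ≤ 1 - σ.stepProb t p * (1 - σ.stayProb C n p.2) :=
            sum_mul_le_one_sub_mul (σ.stepProb_nonneg t) (σ.sum_stepProb t)
              (fun q => σ.stayProb_le_one C n q.2) p
        _ ≤ 1 - ε * ε ^ n := by
            gcongr
            · exact σ.stepProb_nonneg t p
            · linarith
        _ = 1 - ε ^ (n + 1) := by rw [pow_succ']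
    · rw [stayProb_of_notMem htC]
      linarith [pow_le_one₀ hε₀ hε₁ (n := n + 1)]

lemma exists_stayProb_lt {r : S → ℕ}
    (hdesc : ∀ t ∈ C, ∃ p, 0 < σ.stepProb t p ∧ r p.2 < r t) (s : S) {η : ℝ} (hη : 0 < η) :
    ∃ n, σ.stayProb C n s < η := by
  choose q hq using hdesc
  obtain ⟨ε, hε, hεq⟩ := exists_pos_forall_le_of_finite
    (f := fun t : C => σ.stepProb t (q t t.2)) fun t => (hq t t.2).1
  set δ := min ε 1
  have hδ₀ : 0 < δ := lt_min hε one_pos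
  have hδ₁ : δ ≤ 1 := min_le_right _ _
  set N := Finset.univ.sup r + 1
  have hN : ∀ t, σ.stayProb C N t ≤ 1 - δ ^ N := fun t =>
    stayProb_le_one_sub_pow hδ₀.le hδ₁
      (fun t ht => ⟨q t ht, (min_le_left _ _).trans (hεq ⟨t, ht⟩), (hq t ht).2⟩) N t
      (Nat.lt_succ_of_le (Finset.le_sup (Finset.mem_univ t)))
  have hρ₀ : 0 ≤ 1 - δ ^ N := sub_nonneg.2 (pow_le_one₀ hδ₀.le hδ₁)
  have hρ₁ : 1 - δ ^ N < 1 := sub_lt_self 1 (pow_pos hδ₀ N)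
  obtain ⟨k, hk⟩ := exists_pow_lt_of_lt_one hη hρ₁
  exact ⟨k * N, (stayProb_mul_le hρ₀ hN k s).trans_lt hk⟩

/-- Inside `W`, a play avoids `U`, so it either reaches `F` or stays in `W \ F`. -/
lemma satProbN_eq_one_sub_stayProb {U F W : Set S} (hWU : W ∩ U = ∅)
    (hstay : ∀ s ∈ W \ F, ∀ p, 0 < σ.stepProb s p → p.2 ∈ W) (n : ℕ) :
    ∀ s ∈ W, satProbN M σ.strat.toFun U F s n = 1 - σ.stayProb (W \ F) n s := by
  induction n with
  | zero =>
    intro s hs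
    by_cases hF : s ∈ F <;> simp [satProbN_zero, stayProb, hF, hs]
  | succ n ih =>
    intro s hs
    rw [satProbN_strat_succ]
    by_cases hF : s ∈ F
    · simp [hF, stayProb_of_notMem fun h : s ∈ W \ F => h.2 hF]
    have hsC : s ∈ W \ F := ⟨hs, hF⟩
    have hU : s ∉ U := fun hU => (Set.eq_empty_iff_forall_notMem.1 hWU s) ⟨hs, hU⟩
    rw [if_neg hF, if_neg hU, stayProb_succ_of_mem hsC]
    calc ∑ p, σ.stepProb s p * satProbN M σ.strat.toFun U F p.2 n
        = ∑ p, σ.stepProb s p * (1 - σ.stayProb (W \ F) n p.2) :=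
          Finset.sum_congr rfl fun p _ => by
            rcases (σ.stepProb_nonneg s p).eq_or_lt with h | h
            · rw [← h, zero_mul, zero_mul]
            · rw [ih p.2 (hstay s hsC p h)]
      _ = 1 - ∑ p, σ.stepProb s p * σ.stayProb (W \ F) n p.2 := by
          simp only [mul_sub, mul_one, Finset.sum_sub_distrib, σ.sum_stepProb]

end MarkovStrategy

theorem rankWitness_strategy_ASW_general (M : MDP S A) (U F : Set S)
    (W : Set S) (r : S → ℕ) (hW : rankWitness M U F W r)
    (σ : MarkovStrategy M)
    (hsupp : ∀ s ∈ W \ F,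
      {a | 0 < σ.toFun s a} ⊆ {a | a ∈ M.act s ∧ post M s a ⊆ W})
    (hprog : ∀ s ∈ W \ F, ∃ a, 0 < σ.toFun s a ∧
      (post M s a ∩ {t ∈ W | r t < r s}).Nonempty) :
    ∀ s ∈ W, prSat M σ.strat.toFun U F s = 1 := by
  intro s hs
  have hstay : ∀ t ∈ W \ F, ∀ p, 0 < σ.stepProb t p → p.2 ∈ W := fun t ht p hp =>
    (hsupp t ht (σ.stepProb_pos_iff.1 hp).1).2 (σ.stepProb_pos_iff.1 hp).2
  have hdesc : ∀ t ∈ W \ F, ∃ p, 0 < σ.stepProb t p ∧ r p.2 < r t := fun t ht => by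
    obtain ⟨a, ha, u, hu, -, hr⟩ := hprog t ht
    exact ⟨(a, u), σ.stepProb_pos_iff.2 ⟨ha, hu⟩, hr⟩
  rw [prSat, funext fun n => σ.satProbN_eq_one_sub_stayProb hW.1 hstay n s hs]
  exact ciSup_one_sub_eq_one (fun n => σ.stayProb_nonneg _ n s)
    fun η hη => MarkovStrategy.exists_stayProb_lt hdesc s hη

/-- given a ranking witness `(W, r)`, any Markov strategy whose support at
every `s ∈ W \ F` consists of enabled actions keeping the play in `W` and contains a
rank-decreasing action is almost-sure winning from every `s ∈ W`. -/
theorem rankWitness_strategy_ASW (M : MDP S A) (U F : Set S) (hUF : Disjoint U F)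
    (W : Set S) (r : S → ℕ) (hW : rankWitness M U F W r)
    (σ : MarkovStrategy M)
    (hsupp : ∀ s ∈ W \ F,
      {a | 0 < σ.toFun s a} ⊆ {a | a ∈ M.act s ∧ post M s a ⊆ W})
    (hprog : ∀ s ∈ W \ F, ∃ a, 0 < σ.toFun s a ∧
      (post M s a ∩ {t ∈ W | r t < r s}).Nonempty) :
    ∀ s ∈ W, prSat M σ.strat.toFun U F s = 1 :=
  rankWitness_strategy_ASW_general M U F W r hW σ hsupp hprog
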